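/- For every n ≥ 0, Δₙ = Σ_{m=0}^{⌊n/2⌋} (−1)ᵐ·(q^{−m(2δ_{n≢t}+1)} / ((1−q⁻⁴)(1−q⁻⁸)⋯(1−q^{−4m})))·P_{n−2m} in Uⁱ. -/
import Mathlib


/-!
Setting: `K = ℚ(q)` is the field of rational functions over `ℚ`; `U⁻ = ℚ(q)[F]` and
`Uⁱ = ℚ(q)[B]` are both realized as `Polynomial K`, with `F` resp. `B` the variable
`Polynomial.X`.
-/

noncomputable section

abbrev K : Type := RatFunc ℚ

/-- The variable `q` of `ℚ(q)`. -/
def q : K := RatFunc.X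

/-- The quantum integer `[n] = (qⁿ - q⁻ⁿ)/(q - q⁻¹)`. -/
def qint (n : ℕ) : K := (q ^ n - q⁻¹ ^ n) / (q - q⁻¹)

/-- The quantum factorial `[n]! = [1][2]⋯[n]`, `[0]! = 1`. -/
def qfact : ℕ → K
  | 0 => 1
  | n + 1 => qfact n * qint (n + 1)

/-- The PBW basis elements `Δₙ ∈ Uⁱ`: `Δ₀ = 1` and
`[n+1]·Δ_{n+1} = B·Δₙ − (q^{n-1}/(1−q⁻²))·Δ_{n−1}` for `n ≥ 0`, interpreting `Δ₋₁ = 0`. -/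
def Δel : ℕ → Polynomial K
  | 0 => 1
  | 1 => (qint 1)⁻¹ • (Polynomial.X : Polynomial K)
  | n + 2 => (qint (n + 2))⁻¹ •
      (Polynomial.X * Δel (n + 1) - (q ^ n / (1 - q⁻¹ ^ 2)) • Δel n)

/-- The ı-canonical basis elements `Pₙ ∈ Uⁱ` (for the parameter `t ∈ {0,1}`): `P₀ = 1` and
`[n+1]·P_{n+1} = B·Pₙ − δ_{n≡t}·[n]·P_{n−1}` for `n ≥ 0`, interpreting `P₋₁ = 0`
(for `n = 0` the last term vanishes as `[0] = 0`). -/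
def Pel (t : ℕ) : ℕ → Polynomial K
  | 0 => 1
  | 1 => (qint 1)⁻¹ • (Polynomial.X : Polynomial K)
  | n + 2 => (qint (n + 2))⁻¹ •
      (Polynomial.X * Pel t (n + 1) -
        (if (n + 1) % 2 = t % 2 then qint (n + 1) else 0) • Pel t n)

/- ### basic nonvanishing -/

lemma q_pow_ne_one {k : ℕ} (hk : 0 < k) : q ^ k ≠ 1 := by
  intro h
  have : (algebraMap (Polynomial ℚ) K) (Polynomial.X ^ k) = algebraMap (Polynomial ℚ) K 1 := by
    rw [map_pow, map_one, RatFunc.algebraMap_X]; exact h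
  have h2 := IsFractionRing.injective (Polynomial ℚ) K this
  have := congrArg (Polynomial.eval 2) h2
  simp at this
  have : (1:ℚ) < 2 ^ k := one_lt_pow₀ (by norm_num) hk.ne'
  simp_all

lemma q_ne_zero : q ≠ 0 := RatFunc.X_ne_zero

lemma q_sub_inv_ne_zero : q - q⁻¹ ≠ 0 := by
  intro h
  rw [sub_eq_zero] at h
  have h1 : q * q = q⁻¹ * q := by nth_rewrite 1 [h]; rfl
  rw [inv_mul_cancel₀ q_ne_zero] at h1
  exact q_pow_ne_one (k := 2) (by norm_num) (by rw [pow_two]; exact h1)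

lemma one_sub_qinv_pow_ne_zero {m : ℕ} (hm : 0 < m) : (1 : K) - q⁻¹ ^ m ≠ 0 := by
  intro h
  have h1 : q⁻¹ ^ m = 1 := by linear_combination -h
  have : q ^ m = 1 := by
    have := congrArg (·⁻¹) h1
    simpa [inv_pow] using this
  exact q_pow_ne_one hm this

lemma qint_ne_zero {k : ℕ} (hk : 0 < k) : qint k ≠ 0 := by
  apply div_ne_zero _ q_sub_inv_ne_zero
  intro h
  have h1 : q ^ k = q⁻¹ ^ k := by linear_combination h
  have : q ^ (2 * k) = 1 := by
    have := congrArg (· * q ^ k) h1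
    simpa [inv_pow, two_mul, pow_add, inv_mul_cancel₀ (pow_ne_zero k q_ne_zero)] using this
  exact q_pow_ne_one (by omega) this

lemma qint_zero : qint 0 = 0 := by simp [qint]
lemma qint_one : qint 1 = 1 := by simp [qint, div_self q_sub_inv_ne_zero]

/- ### coefficients -/

def Dpr (m : ℕ) : K := ∏ k ∈ Finset.range m, (1 - q⁻¹ ^ (4 * (k + 1)))

lemma Dpr_ne_zero (m : ℕ) : Dpr m ≠ 0 :=
  Finset.prod_ne_zero_iff.2 fun k _ => one_sub_qinv_pow_ne_zero (by omega)

lemma Dpr_succ (m : ℕ) : Dpr (m + 1) = Dpr m * (1 - q⁻¹ ^ (4 * (m + 1))) :=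
  Finset.prod_range_succ _ _

def Cf (d m : ℕ) : K := (-1) ^ m * q⁻¹ ^ (m * (2 * d + 1)) / Dpr m

lemma Cf_zero (x : ℕ) : Cf x 0 = 1 := by simp [Cf, Dpr]

/- ### the key scalar identity -/

lemma keyW0 (u A J E e : K) (hE : E ≠ 0) (hE2 : 1 - J ^ 4 * u ^ 4 = E) :
    (1 - A * J ^ 4 * u ^ 4) * ((-1) * e * (J * u)) / E =
      J ^ 2 * u ^ 2 * (1 - A) * ((-1) * e * (J ^ 3 * u ^ 3)) / E - u * (e * J) := by
  field_simp
  rw [← hE2]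
  ring

lemma keyW1 (u A J E e : K) (hE : E ≠ 0) (hE2 : 1 - J ^ 4 * u ^ 4 = E) :
    (1 - A * J ^ 4 * u ^ 4) * ((-1) * e * (J ^ 3 * u ^ 3)) / E =
      J ^ 2 * u ^ 2 * (1 - A) * ((-1) * e * (J * u)) / E +
        J ^ 2 * u * (1 - A * u ^ 2) * (e * J) - u * (e * J ^ 3) := by
  field_simp
  rw [← hE2]
  ring

set_option maxHeartbeats 1000000 in
lemma keyU (d a j : ℕ) (hd : d = 0 ∨ d = 1) :
    (1 - q⁻¹ ^ (2 * (a + 2 * j + 2))) / (1 - q⁻¹ ^ 2) * Cf d (j + 1) =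
      q⁻¹ ^ (2 * j + 2) * (1 - q⁻¹ ^ (2 * a)) / (1 - q⁻¹ ^ 2) * Cf (1 - d) (j + 1) +
        (d : K) * (q⁻¹ ^ (2 * j + 1) * (1 - q⁻¹ ^ (2 * (a + 1))) / (1 - q⁻¹ ^ 2) * Cf (1 - d) j) -
        q⁻¹ / (1 - q⁻¹ ^ 2) * Cf d j := by
  have h1 := Dpr_ne_zero j
  have h2 := one_sub_qinv_pow_ne_zero (m := 4 * (j + 1)) (by omega)
  have h4 := one_sub_qinv_pow_ne_zero (m := 2) (by omega)
  have h6 : q⁻¹ ≠ 0 := inv_ne_zero q_ne_zero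
  have hE2 : (1 : K) - (q⁻¹ ^ j) ^ 4 * q⁻¹ ^ 4 = 1 - q⁻¹ ^ (4 * (j + 1)) := by
    rw [show 4 * (j + 1) = j * 4 + 4 by ring, pow_add, pow_mul]
  rcases hd with rfl | rfl
  · have h := keyW0 q⁻¹ (q⁻¹ ^ (2 * a)) (q⁻¹ ^ j) (1 - q⁻¹ ^ (4 * (j + 1))) ((-1) ^ j) h2 hE2
    simp only [Cf, Dpr_succ, ← div_div]
    push_cast
    linear_combination (1 - q⁻¹ ^ 2)⁻¹ * (Dpr j)⁻¹ * h
  · have h := keyW1 q⁻¹ (q⁻¹ ^ (2 * a)) (q⁻¹ ^ j) (1 - q⁻¹ ^ (4 * (j + 1))) ((-1) ^ j) h2 hE2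
    simp only [Cf, Dpr_succ, ← div_div]
    push_cast
    linear_combination (1 - q⁻¹ ^ 2)⁻¹ * (Dpr j)⁻¹ * h

/- ### scaling lemmas -/

lemma pow_inv_mul_pow (c : ℕ) : (q⁻¹ : K) ^ c * q ^ c = 1 := by
  rw [← mul_pow, inv_mul_cancel₀ q_ne_zero, one_pow]

lemma squint2 (s c : ℕ) :
    (q⁻¹ : K) ^ (s + c) * qint (c + 1) =
      q⁻¹ ^ s * (1 - q⁻¹ ^ (2 * (c + 1))) / (1 - q⁻¹ ^ 2) := by
  have h4 := one_sub_qinv_pow_ne_zero (m := 2) (by omega)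
  have h3 := q_sub_inv_ne_zero
  have hcore : (q⁻¹ : K) ^ c * ((q ^ (c+1) - q⁻¹ ^ (c+1)) / (q - q⁻¹)) =
      (1 - q⁻¹ ^ (2 * (c + 1))) / (1 - q⁻¹ ^ 2) := by
    rw [mul_div_assoc', div_eq_div_iff h3 h4]
    linear_combination (q * (1 - q⁻¹ ^ 2)) * pow_inv_mul_pow c -
      (q⁻¹ * (1 - q⁻¹ ^ (2 * c))) * (mul_inv_cancel₀ q_ne_zero)
  rw [qint, pow_add, mul_assoc, hcore, mul_div_assoc]

lemma squint (s c : ℕ) :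
    (q⁻¹ : K) ^ (s + c) * qint c =
      q⁻¹ ^ (s + 1) * (1 - q⁻¹ ^ (2 * c)) / (1 - q⁻¹ ^ 2) := by
  cases c with
  | zero => simp [qint_zero]
  | succ k =>
      rw [show s + (k + 1) = (s + 1) + k by omega]
      exact squint2 (s + 1) k

lemma scaled_r (n : ℕ) :
    (q⁻¹ : K) ^ (n + 1) * (q ^ n / (1 - q⁻¹ ^ 2)) = q⁻¹ / (1 - q⁻¹ ^ 2) := by
  rw [mul_div_assoc', pow_succ', mul_assoc, pow_inv_mul_pow, mul_one]

/- ### polynomial recurrences -/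

lemma Pel_one (t : ℕ) : Pel t 1 = Polynomial.X := by
  show (qint 1)⁻¹ • (Polynomial.X : Polynomial K) = _
  rw [qint_one]; simp

lemma X_mul_Pel (t k : ℕ) :
    Polynomial.X * Pel t k =
      qint (k + 1) • Pel t (k + 1) +
        (if k % 2 = t % 2 then qint k else 0) • Pel t (k - 1) := by
  cases k with
  | zero =>
      have : (if 0 % 2 = t % 2 then qint 0 else 0) = 0 := by
        split <;> simp [qint_zero]
      rw [this, zero_smul, add_zero]
      show Polynomial.X * 1 = qint 1 • Pel t 1
      rw [qint_one, Pel_one, one_smul, mul_one]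
  | succ k =>
      have hQ : qint (k + 2) ≠ 0 := qint_ne_zero (by omega)
      have h : Pel t (k + 2) = (qint (k + 2))⁻¹ •
          (Polynomial.X * Pel t (k + 1) -
            (if (k + 1) % 2 = t % 2 then qint (k + 1) else 0) • Pel t k) := rfl
      rw [show k + 1 + 1 = k + 2 from rfl, show k + 1 - 1 = k from rfl, h,
        smul_inv_smul₀ hQ, sub_add_cancel]

set_option maxHeartbeats 1000000 in
theorem main (t : ℕ) (ht : t = 0 ∨ t = 1) (n : ℕ) :
    Δel n = ∑ m ∈ Finset.range (n / 2 + 1),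
      Cf (if n % 2 = t % 2 then 0 else 1) m • Pel t (n - 2 * m) := by
  induction n using Nat.twoStepInduction with
  | zero =>
      rw [Finset.sum_range_one, Cf_zero, one_smul]
      rfl
  | one =>
      rw [Finset.sum_range_one, Cf_zero, one_smul]
      rfl
  | more n ih ih1 =>
      have h6 : (q⁻¹ : K) ≠ 0 := inv_ne_zero q_ne_zero
      have hQ : qint (n + 2) ≠ 0 := qint_ne_zero (by omega)
      have hU : (q⁻¹ : K) ^ (n + 1) ≠ 0 := pow_ne_zero _ h6
      simp only [show ((n + 2) % 2 = t % 2) ↔ (n % 2 = t % 2) from by omega]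
      set d : ℕ := if n % 2 = t % 2 then 0 else 1 with hdd
      have hdor : d = 0 ∨ d = 1 := by rw [hdd]; split <;> simp
      have hd1 : (if (n + 1) % 2 = t % 2 then (0:ℕ) else 1) = 1 - d := by
        by_cases hc : n % 2 = t % 2
        · rw [if_neg (by rcases ht with rfl | rfl <;> omega), hdd, if_pos hc]
        · rw [if_pos (by rcases ht with rfl | rfl <;> omega), hdd, if_neg hc]
      simp only [hd1] at ih1
      have hite : ∀ X : K, (if (n + 1) % 2 = t % 2 then X else 0) = (d : K) * X := by
        intro X
        by_cases hc : n % 2 = t % 2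
        · rw [if_neg (by rcases ht with rfl | rfl <;> omega), hdd, if_pos hc]; norm_num
        · rw [if_pos (by rcases ht with rfl | rfl <;> omega), hdd, if_neg hc]; norm_num
      have hA2 : (q⁻¹ : K) ^ (n + 1) * qint (n + 2) =
          (1 - q⁻¹ ^ (2 * (n + 2))) / (1 - q⁻¹ ^ 2) := by
        simpa using squint2 0 (n + 1)
      -- unfold the recurrence and clear the inverse
      rw [show Δel (n + 2) = (qint (n + 2))⁻¹ •
          (Polynomial.X * Δel (n + 1) - (q ^ n / (1 - q⁻¹ ^ 2)) • Δel n) from rfl,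
        ih1, ih, inv_smul_eq_iff₀ hQ,
        show (n + 2) / 2 + 1 = (n / 2 + 1) + 1 by omega]
      apply smul_right_injective (Polynomial K) hU
      beta_reduce
      have hXS : Polynomial.X *
          (∑ m ∈ Finset.range ((n + 1) / 2 + 1), Cf (1 - d) m • Pel t (n + 1 - 2 * m)) =
          (∑ m ∈ Finset.range ((n + 1) / 2 + 1),
            Cf (1 - d) m • (qint (n + 2 - 2 * m) • Pel t (n + 2 - 2 * m))) +
          ∑ m ∈ Finset.range ((n + 1) / 2 + 1),
            Cf (1 - d) m • (((d : K) * qint (n + 1 - 2 * m)) • Pel t (n - 2 * m)) := by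
        rw [Finset.mul_sum, ← Finset.sum_add_distrib]
        refine Finset.sum_congr rfl fun m hm => ?_
        have hm' : 2 * m ≤ n + 1 := by have := Finset.mem_range.1 hm; omega
        rw [mul_smul_comm, X_mul_Pel t (n + 1 - 2 * m),
          show n + 1 - 2 * m + 1 = n + 2 - 2 * m by omega,
          show n + 1 - 2 * m - 1 = n - 2 * m by omega,
          show (n + 1 - 2 * m) % 2 = (n + 1) % 2 by omega,
          hite (qint (n + 1 - 2 * m)), smul_add]
      have hsub1 : Finset.range ((n + 1) / 2 + 1) ⊆ Finset.range ((n / 2 + 1) + 1) :=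
        Finset.range_subset_range.2 (by omega)
      have hsub0 : Finset.range (n / 2 + 1) ⊆ Finset.range ((n + 1) / 2 + 1) :=
        Finset.range_subset_range.2 (by omega)
      have hS1a : (q⁻¹ : K) ^ (n + 1) • (∑ m ∈ Finset.range ((n + 1) / 2 + 1),
            Cf (1 - d) m • (qint (n + 2 - 2 * m) • Pel t (n + 2 - 2 * m))) =
          ∑ m ∈ Finset.range ((n / 2 + 1) + 1),
            (q⁻¹ ^ (2 * m) * (1 - q⁻¹ ^ (2 * (n + 2 - 2 * m))) / (1 - q⁻¹ ^ 2) *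
              Cf (1 - d) m) • Pel t (n + 2 - 2 * m) := by
        rw [Finset.smul_sum]
        refine Eq.trans (Finset.sum_congr rfl fun m hm => ?_)
          (Finset.sum_subset hsub1 fun x hx hnx => ?_)
        · have hm' : 2 * m ≤ n + 1 := by have := Finset.mem_range.1 hm; omega
          rw [smul_smul, smul_smul]
          congr 1
          rw [show n + 2 - 2 * m = (n + 1 - 2 * m) + 1 by omega]
          conv_lhs => rw [show ((q⁻¹ : K) ^ (n + 1)) = q⁻¹ ^ (2 * m + (n + 1 - 2 * m)) from by
            rw [show 2 * m + (n + 1 - 2 * m) = n + 1 by omega]]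
          linear_combination Cf (1 - d) m * squint2 (2 * m) (n + 1 - 2 * m)
        · have h1 : n + 2 - 2 * x = 0 := by
            have hx' := Finset.mem_range.1 hx
            have hnx' : ¬ x < (n + 1) / 2 + 1 := fun h => hnx (Finset.mem_range.2 h)
            omega
          rw [h1]
          norm_num
      have hS1b : (q⁻¹ : K) ^ (n + 1) • (∑ m ∈ Finset.range ((n + 1) / 2 + 1),
            Cf (1 - d) m • (((d : K) * qint (n + 1 - 2 * m)) • Pel t (n - 2 * m))) =
          ∑ m ∈ Finset.range (n / 2 + 1),
            ((d : K) * (q⁻¹ ^ (2 * m + 1) * (1 - q⁻¹ ^ (2 * (n + 1 - 2 * m))) / (1 - q⁻¹ ^ 2) *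
              Cf (1 - d) m)) • Pel t (n - 2 * m) := by
        rw [Finset.smul_sum]
        refine Eq.trans (Finset.sum_congr rfl fun m hm => ?_)
          (Finset.sum_subset hsub0 fun x hx hnx => ?_).symm
        · have hm' : 2 * m ≤ n + 1 := by have := Finset.mem_range.1 hm; omega
          rw [smul_smul, smul_smul]
          congr 1
          conv_lhs => rw [show ((q⁻¹ : K) ^ (n + 1)) = q⁻¹ ^ (2 * m + (n + 1 - 2 * m)) from by
            rw [show 2 * m + (n + 1 - 2 * m) = n + 1 by omega]]
          linear_combination Cf (1 - d) m * (d : K) * squint (2 * m) (n + 1 - 2 * m)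
        · have h1 : n + 1 - 2 * x = 0 := by
            have hx' := Finset.mem_range.1 hx
            have hnx' : ¬ x < n / 2 + 1 := fun h => hnx (Finset.mem_range.2 h)
            omega
          rw [h1]
          norm_num
      have hS0 : (q⁻¹ : K) ^ (n + 1) • ((q ^ n / (1 - q⁻¹ ^ 2)) •
            ∑ m ∈ Finset.range (n / 2 + 1), Cf d m • Pel t (n - 2 * m)) =
          ∑ m ∈ Finset.range (n / 2 + 1),
            (q⁻¹ / (1 - q⁻¹ ^ 2) * Cf d m) • Pel t (n - 2 * m) := by
        rw [smul_smul, scaled_r, Finset.smul_sum]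
        exact Finset.sum_congr rfl fun m _ => by rw [smul_smul]
      have hS2 : (q⁻¹ : K) ^ (n + 1) • (qint (n + 2) •
            ∑ m ∈ Finset.range ((n / 2 + 1) + 1), Cf d m • Pel t (n + 2 - 2 * m)) =
          ∑ m ∈ Finset.range ((n / 2 + 1) + 1),
            ((1 - q⁻¹ ^ (2 * (n + 2))) / (1 - q⁻¹ ^ 2) * Cf d m) • Pel t (n + 2 - 2 * m) := by
        rw [smul_smul, hA2, Finset.smul_sum]
        exact Finset.sum_congr rfl fun m _ => by rw [smul_smul]
      rw [smul_sub, hXS, smul_add, hS1a, hS1b, hS0, hS2, add_sub_assoc,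
        ← Finset.sum_sub_distrib]
      simp only [← sub_smul]
      simp only [show ∀ m : ℕ, n - 2 * m = n + 2 - 2 * (m + 1) from fun m => by omega]
      rw [show (∑ m ∈ Finset.range (n / 2 + 1),
            ((d : K) * (q⁻¹ ^ (2 * m + 1) * (1 - q⁻¹ ^ (2 * (n + 1 - 2 * m))) / (1 - q⁻¹ ^ 2) *
              Cf (1 - d) m) - q⁻¹ / (1 - q⁻¹ ^ 2) * Cf d m) • Pel t (n + 2 - 2 * (m + 1))) =
          ∑ m ∈ Finset.range ((n / 2 + 1) + 1),
            (if m = 0 then 0 else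
              ((d : K) * (q⁻¹ ^ (2 * (m - 1) + 1) * (1 - q⁻¹ ^ (2 * (n + 1 - 2 * (m - 1)))) /
                (1 - q⁻¹ ^ 2) * Cf (1 - d) (m - 1)) -
                q⁻¹ / (1 - q⁻¹ ^ 2) * Cf d (m - 1))) • Pel t (n + 2 - 2 * m) from by
          conv_rhs => rw [Finset.sum_range_succ']
          simp]
      rw [← Finset.sum_add_distrib]
      refine Finset.sum_congr rfl fun m hm => ?_
      rw [← add_smul]
      congr 1
      rcases m with _ | j
      · simp [Cf_zero]
      · have hj : 2 * j ≤ n := by have := Finset.mem_range.1 hm; omega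
        rw [if_neg (Nat.succ_ne_zero j), Nat.succ_sub_one,
          show n + 2 - 2 * (j + 1) = n - 2 * j by omega,
          show n + 1 - 2 * j = (n - 2 * j) + 1 by omega,
          show (2 : ℕ) * (n + 2) = 2 * ((n - 2 * j) + 2 * j + 2) by omega,
          show (2 : ℕ) * (j + 1) = 2 * j + 2 by omega]
        linear_combination (-1 : K) * keyU d (n - 2 * j) j hdor


/-- for every `n ≥ 0`,
`Δₙ = Σ_{m=0}^{⌊n/2⌋} (−1)ᵐ·(q^{−m(2δ_{n≢t}+1)}/((1−q⁻⁴)(1−q⁻⁸)⋯(1−q^{−4m})))·P_{n−2m}`. -/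
theorem stmt12 (t : ℕ) (ht : t = 0 ∨ t = 1) (n : ℕ) :
    Δel n =
      ∑ m ∈ Finset.range (n / 2 + 1),
        ((-1 : K) ^ m * q⁻¹ ^ (m * (2 * (if n % 2 = t % 2 then 0 else 1) + 1)) /
            ∏ k ∈ Finset.range m, (1 - q⁻¹ ^ (4 * (k + 1)))) • Pel t (n - 2 * m) := by
  simpa only [Cf, Dpr] using main t ht n

end
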